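/- Let U : ℝ^d × P₂(ℝ^d) → ℝ^d be continuous (where P₂(ℝ^d) is equipped with the 2-Wasserstein distance) and L²-monotone. Then for every μ ∈ P₂(ℝ^d) the map x ↦ U(x,μ) is monotone in the classical sense: for all x, y ∈ ℝ^d, (U(x,μ) − U(y,μ)) · (x − y) ≥ 0. -/

import Mathlib

open MeasureTheory Set
open scoped ENNReal RealInnerProductSpace NNReal

noncomputable section

/-- A coupling of two measures on `ℝ^d`. -/
def IsCoupling {d : ℕ} (γ : Measure (EuclideanSpace ℝ (Fin d) × EuclideanSpace ℝ (Fin d)))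
    (μ ν : Measure (EuclideanSpace ℝ (Fin d))) : Prop :=
  γ.map Prod.fst = μ ∧ γ.map Prod.snd = ν

/-- `μ ∈ P₂(ℝ^d)`: a Borel probability measure with finite second moment. -/
def MemP2 {d : ℕ} (μ : Measure (EuclideanSpace ℝ (Fin d))) : Prop :=
  IsProbabilityMeasure μ ∧ Integrable (fun x => ‖x‖ ^ 2) μ

/-- The 2-Wasserstein distance, as the infimum over couplings. -/
def W2 {d : ℕ} (μ ν : Measure (EuclideanSpace ℝ (Fin d))) : ℝ≥0∞ :=
  ⨅ γ ∈ {γ : Measure (EuclideanSpace ℝ (Fin d) × EuclideanSpace ℝ (Fin d)) |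
      IsCoupling γ μ ν},
    (∫⁻ p, (‖p.1 - p.2‖₊ : ℝ≥0∞) ^ 2 ∂γ) ^ ((1 : ℝ) / 2)

/-! Perturb `μ` into `μₜ = (1 - t) μ + t δₓ` and `νₜ = (1 - t) μ + t δ_y`, coupled by the
diagonal coupling of `μ` with itself plus the mass `t` at `(x, y)`. The diagonal contributes
nothing, so `L²`-monotonicity for this coupling reads `t ⟪U(x, μₜ) - U(y, νₜ), x - y⟫ ≥ 0`.
Transporting the mass `t` of `μ` to `x` shows `W₂(μ, μₜ)² ≤ t ∫ ‖z - x‖² dμ`, so continuity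
of `U` lets `t → 0⁺`. -/

open Filter Topology

/-- `ENNReal.ofReal` truncates at `0`, so this is a convex combination only for `t ∈ [0, 1]`. -/
def mixture {α : Type*} [MeasurableSpace α] (t : ℝ) (μ ν : Measure α) : Measure α :=
  ENNReal.ofReal (1 - t) • μ + ENNReal.ofReal t • ν

section Mixture

variable {α : Type*} [MeasurableSpace α] {t : ℝ}

lemma mixture_self (ht₀ : 0 ≤ t) (ht₁ : t ≤ 1) (μ : Measure α) : mixture t μ μ = μ := by
  rw [mixture, ← add_smul, ← ENNReal.ofReal_add (by linarith) ht₀, sub_add_cancel,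
    ENNReal.ofReal_one, one_smul]

lemma map_mixture {β : Type*} [MeasurableSpace β] {f : α → β} (hf : Measurable f)
    (μ ν : Measure α) : (mixture t μ ν).map f = mixture t (μ.map f) (ν.map f) := by
  rw [mixture, mixture, Measure.map_add _ _ hf, Measure.map_smul, Measure.map_smul]

lemma lintegral_mixture (f : α → ℝ≥0∞) (μ ν : Measure α) :
    ∫⁻ a, f a ∂mixture t μ ν = ENNReal.ofReal (1 - t) * ∫⁻ a, f a ∂μ
      + ENNReal.ofReal t * ∫⁻ a, f a ∂ν := by
  rw [mixture, lintegral_add_measure, lintegral_smul_measure, lintegral_smul_measure]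
  rfl

lemma integral_mixture (ht₀ : 0 ≤ t) (ht₁ : t ≤ 1) {μ ν : Measure α} {f : α → ℝ}
    (hμ : Integrable f μ) (hν : Integrable f ν) :
    ∫ a, f a ∂mixture t μ ν = (1 - t) * ∫ a, f a ∂μ + t * ∫ a, f a ∂ν := by
  rw [mixture, integral_add_measure (hμ.smul_measure ENNReal.ofReal_ne_top)
      (hν.smul_measure ENNReal.ofReal_ne_top), integral_smul_measure, integral_smul_measure,
    ENNReal.toReal_ofReal (by linarith), ENNReal.toReal_ofReal ht₀, smul_eq_mul, smul_eq_mul]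

end Mixture

lemma ae_eq_zero_map_diag {α : Type*} [MeasurableSpace α] [MeasurableEq α] (μ : Measure α)
    {f : α × α → ℝ} (hf : ∀ z, f (z, z) = 0) : f =ᵐ[μ.map fun z => (z, z)] 0 := by
  have hdiag : Measurable fun z : α => (z, z) := measurable_id.prodMk measurable_id
  filter_upwards [(ae_map_iff hdiag.aemeasurable measurableSet_diagonal).2
    (Eventually.of_forall fun _ => rfl)] with ⟨a, b⟩ (hab : a = b)
  subst hab
  exact hf a

section Euclidean

variable {d : ℕ}

local notation "E" => EuclideanSpace ℝ (Fin d)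

lemma IsCoupling.mixture {t : ℝ} {γ₁ γ₂ : Measure (E × E)} {μ₁ μ₂ ν₁ ν₂ : Measure E}
    (h₁ : IsCoupling γ₁ μ₁ ν₁) (h₂ : IsCoupling γ₂ μ₂ ν₂) :
    IsCoupling (mixture t γ₁ γ₂) (mixture t μ₁ μ₂) (mixture t ν₁ ν₂) := by
  rw [IsCoupling, map_mixture measurable_fst, map_mixture measurable_snd, h₁.1, h₁.2, h₂.1, h₂.2]
  exact ⟨rfl, rfl⟩

lemma isCoupling_map_diag (μ : Measure E) : IsCoupling (μ.map fun z => (z, z)) μ μ := by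
  have hdiag : Measurable fun z : E => (z, z) := measurable_id.prodMk measurable_id
  refine ⟨?_, ?_⟩ <;>
  · rw [Measure.map_map (by fun_prop) hdiag]
    exact Measure.map_id

lemma isCoupling_dirac (x y : E) :
    IsCoupling (Measure.dirac (x, y)) (Measure.dirac x) (Measure.dirac y) :=
  ⟨Measure.map_dirac' measurable_fst _, Measure.map_dirac' measurable_snd _⟩

lemma isCoupling_map_prodMk_const (μ : Measure E) [IsProbabilityMeasure μ] (x : E) :
    IsCoupling (μ.map fun z => (z, x)) μ (Measure.dirac x) := by
  have hmk : Measurable fun z : E => (z, x) := measurable_id.prodMk measurable_const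
  refine ⟨?_, ?_⟩
  · rw [Measure.map_map measurable_fst hmk]
    exact Measure.map_id
  · rw [Measure.map_map measurable_snd hmk]
    simp [Function.comp_def]

lemma memP2_dirac (x : E) : MemP2 (Measure.dirac x) :=
  ⟨inferInstance, integrable_dirac enorm_lt_top⟩

lemma MemP2.mixture {t : ℝ} (ht₀ : 0 ≤ t) (ht₁ : t ≤ 1) {μ ν : Measure E} (hμ : MemP2 μ)
    (hν : MemP2 ν) : MemP2 (mixture t μ ν) := by
  have := hμ.1
  have := hν.1
  refine ⟨⟨?_⟩, (hμ.2.smul_measure ENNReal.ofReal_ne_top).add_measure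
    (hν.2.smul_measure ENNReal.ofReal_ne_top)⟩
  rw [_root_.mixture, Measure.add_apply, Measure.smul_apply, Measure.smul_apply, measure_univ,
    measure_univ, smul_eq_mul, smul_eq_mul, mul_one, mul_one,
    ← ENNReal.ofReal_add (by linarith) ht₀, sub_add_cancel, ENNReal.ofReal_one]

lemma MemP2.lintegral_nnnorm_sub_sq_lt_top {μ : Measure E} (hμ : MemP2 μ) (x : E) :
    ∫⁻ z, (‖z - x‖₊ : ℝ≥0∞) ^ 2 ∂μ < ⊤ := by
  have := hμ.1
  have hL2 : MemLp (fun z : E => z - x) 2 μ :=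
    ((memLp_two_iff_integrable_sq_norm aestronglyMeasurable_id).2 hμ.2).sub (memLp_const x)
  have := ((memLp_two_iff_integrable_sq_norm hL2.1).1 hL2).2
  rw [HasFiniteIntegral] at this
  simpa [enorm_pow, enorm_eq_nnnorm] using this

lemma W2_le_of_isCoupling {γ : Measure (E × E)} {μ ν : Measure E} (hγ : IsCoupling γ μ ν) :
    W2 μ ν ≤ (∫⁻ p, (‖p.1 - p.2‖₊ : ℝ≥0∞) ^ 2 ∂γ) ^ ((1 : ℝ) / 2) :=
  iInf₂_le γ hγ

lemma W2_mixture_dirac_le {μ : Measure E} [IsProbabilityMeasure μ] {t : ℝ} (ht₀ : 0 ≤ t)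
    (ht₁ : t ≤ 1) (x : E) :
    W2 μ (mixture t μ (Measure.dirac x))
      ≤ (ENNReal.ofReal t * ∫⁻ z, (‖z - x‖₊ : ℝ≥0∞) ^ 2 ∂μ) ^ ((1 : ℝ) / 2) := by
  have hγ := (isCoupling_map_diag μ).mixture (t := t) (isCoupling_map_prodMk_const μ x)
  rw [mixture_self ht₀ ht₁] at hγ
  refine (W2_le_of_isCoupling hγ).trans_eq ?_
  have hcost : Measurable fun p : E × E => (‖p.1 - p.2‖₊ : ℝ≥0∞) ^ 2 := by fun_prop
  rw [lintegral_mixture, lintegral_map hcost (by fun_prop), lintegral_map hcost (by fun_prop)]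
  simp

lemma tendsto_W2_mixture_dirac {μ : Measure E} (hμ : MemP2 μ) (x : E) :
    Tendsto (fun t => W2 μ (mixture t μ (Measure.dirac x))) (𝓝[>] 0) (𝓝 0) := by
  have := hμ.1
  have hbound : Tendsto (fun t : ℝ => (ENNReal.ofReal t * ∫⁻ z, (‖z - x‖₊ : ℝ≥0∞) ^ 2 ∂μ)
      ^ ((1 : ℝ) / 2)) (𝓝[>] 0) (𝓝 0) := by
    have hcont : Continuous fun t : ℝ => (ENNReal.ofReal t * ∫⁻ z, (‖z - x‖₊ : ℝ≥0∞) ^ 2 ∂μ)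
        ^ ((1 : ℝ) / 2) :=
      ENNReal.continuous_rpow_const.comp
        ((ENNReal.continuous_mul_const (hμ.lintegral_nnnorm_sub_sq_lt_top x).ne).comp
          ENNReal.continuous_ofReal)
    simpa using (hcont.tendsto 0).mono_left nhdsWithin_le_nhds
  refine tendsto_of_tendsto_of_tendsto_of_le_of_le' tendsto_const_nhds hbound
    (Eventually.of_forall fun _ => zero_le) ?_
  filter_upwards [Ioc_mem_nhdsGT one_pos] with t ⟨ht₀, ht₁⟩
  exact W2_mixture_dirac_le ht₀.le ht₁ x

lemma eventually_memP2_mixture_dirac {μ : Measure E} (hμ : MemP2 μ) (x : E) :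
    ∀ᶠ t in 𝓝[>] 0, MemP2 (mixture t μ (Measure.dirac x)) := by
  filter_upwards [Ioc_mem_nhdsGT one_pos] with t ⟨ht₀, ht₁⟩
  exact hμ.mixture ht₀.le ht₁ (memP2_dirac x)

lemma tendsto_of_tendsto_W2 {U : E → Measure E → E} {μ : Measure E} {x : E}
    (hcont : ∀ ε > (0 : ℝ), ∃ δ > (0 : ℝ), ∀ ν, MemP2 ν → ∀ x' : E,
      W2 μ ν < ENNReal.ofReal δ → dist x x' < δ → ‖U x' ν - U x μ‖ < ε)
    {ι : Type*} {l : Filter ι} {ν : ι → Measure E} (hν : ∀ᶠ i in l, MemP2 (ν i))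
    (hW : Tendsto (fun i => W2 μ (ν i)) l (𝓝 0)) :
    Tendsto (fun i => U x (ν i)) l (𝓝 (U x μ)) := by
  refine Metric.tendsto_nhds.2 fun ε hε => ?_
  obtain ⟨δ, hδ, hU⟩ := hcont ε hε
  filter_upwards [hν, hW.eventually (gt_mem_nhds (ENNReal.ofReal_pos.2 hδ))] with i hνi hWi
  rw [dist_eq_norm]
  exact hU _ hνi x hWi (by rwa [dist_self])

lemma integral_mixture_map_diag_dirac {μ : Measure E} [IsProbabilityMeasure μ] {t : ℝ}
    (ht₀ : 0 ≤ t) (ht₁ : t ≤ 1) {f : E × E → ℝ} (hf : ∀ z, f (z, z) = 0) (x y : E) :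
    ∫ p, f p ∂mixture t (μ.map fun z => (z, z)) (Measure.dirac (x, y)) = t * f (x, y) := by
  have hf₀ := ae_eq_zero_map_diag μ hf
  rw [integral_mixture ht₀ ht₁ ((integrable_zero _ _ _).congr hf₀.symm)
    (integrable_dirac enorm_lt_top), integral_congr_ae hf₀, integral_dirac]
  simp

end Euclidean

theorem L2monotone_implies_pointwise_monotone_general (d : ℕ)
    (U : EuclideanSpace ℝ (Fin d) → Measure (EuclideanSpace ℝ (Fin d)) →
      EuclideanSpace ℝ (Fin d))
    (hcont : ∀ μ, MemP2 μ → ∀ x : EuclideanSpace ℝ (Fin d), ∀ ε > (0 : ℝ), ∃ δ > (0 : ℝ),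
      ∀ ν, MemP2 ν → ∀ x' : EuclideanSpace ℝ (Fin d),
        W2 μ ν < ENNReal.ofReal δ → dist x x' < δ → ‖U x' ν - U x μ‖ < ε)
    (hmono : ∀ μ ν, MemP2 μ → MemP2 ν →
      ∀ γ : Measure (EuclideanSpace ℝ (Fin d) × EuclideanSpace ℝ (Fin d)),
        IsCoupling γ μ ν →
        0 ≤ ∫ p, ⟪U p.1 μ - U p.2 ν, p.1 - p.2⟫ ∂γ) :
    ∀ μ, MemP2 μ → ∀ x y : EuclideanSpace ℝ (Fin d),
      0 ≤ ⟪U x μ - U y μ, x - y⟫ := by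
  intro μ hμ x y
  have := hμ.1
  let μₜ (t : ℝ) := mixture t μ (Measure.dirac x)
  let νₜ (t : ℝ) := mixture t μ (Measure.dirac y)
  have hpos : ∀ᶠ t in 𝓝[>] 0, 0 ≤ ⟪U x (μₜ t) - U y (νₜ t), x - y⟫ := by
    filter_upwards [Ioc_mem_nhdsGT one_pos, eventually_memP2_mixture_dirac hμ x,
      eventually_memP2_mixture_dirac hμ y] with t ⟨ht₀, ht₁⟩ hμₜ hνₜ
    have h := hmono (μₜ t) (νₜ t) hμₜ hνₜ _
      ((isCoupling_map_diag μ).mixture (isCoupling_dirac x y))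
    rw [integral_mixture_map_diag_dirac ht₀.le ht₁ (by simp)] at h
    exact nonneg_of_mul_nonneg_right h ht₀
  have hx : Tendsto (fun t => U x (μₜ t)) (𝓝[>] 0) (𝓝 (U x μ)) :=
    tendsto_of_tendsto_W2 (hcont μ hμ x) (eventually_memP2_mixture_dirac hμ x)
      (tendsto_W2_mixture_dirac hμ x)
  have hy : Tendsto (fun t => U y (νₜ t)) (𝓝[>] 0) (𝓝 (U y μ)) :=
    tendsto_of_tendsto_W2 (hcont μ hμ y) (eventually_memP2_mixture_dirac hμ y)
      (tendsto_W2_mixture_dirac hμ y)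
  exact ge_of_tendsto ((hx.sub hy).inner tendsto_const_nhds) hpos

/-- **Lemma (Section 2.2).** A continuous `L²`-monotone function
`U : ℝ^d × P₂(ℝ^d) → ℝ^d` is, for each fixed measure `μ`, monotone in the classical
sense in its space variable. -/
theorem L2monotone_implies_pointwise_monotone (d : ℕ)
    (U : EuclideanSpace ℝ (Fin d) → Measure (EuclideanSpace ℝ (Fin d)) →
      EuclideanSpace ℝ (Fin d))
    (hcont : ∀ μ, MemP2 μ → ∀ x : EuclideanSpace ℝ (Fin d), ∀ ε > (0 : ℝ), ∃ δ > (0 : ℝ),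
      ∀ ν, MemP2 ν → ∀ x' : EuclideanSpace ℝ (Fin d),
        W2 μ ν < ENNReal.ofReal δ → dist x x' < δ → ‖U x' ν - U x μ‖ < ε)
    (hint : ∀ μ, MemP2 μ → Integrable (fun x => ‖U x μ‖ ^ 2) μ)
    (hmono : ∀ μ ν, MemP2 μ → MemP2 ν →
      ∀ γ : Measure (EuclideanSpace ℝ (Fin d) × EuclideanSpace ℝ (Fin d)),
        IsCoupling γ μ ν →
        0 ≤ ∫ p, ⟪U p.1 μ - U p.2 ν, p.1 - p.2⟫ ∂γ) :
    ∀ μ, MemP2 μ → ∀ x y : EuclideanSpace ℝ (Fin d),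
      0 ≤ ⟪U x μ - U y μ, x - y⟫ :=
  L2monotone_implies_pointwise_monotone_general d U hcont hmono
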